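/- For the fixed point Q* of the counterfactual-budgeting Bellman operator, and Q^μ the behavior policy evaluation fixed point, Q*(s, b, a) ≥ Q^μ(s, a) for all s, a and all budgets b ∈ {0, ..., B}. -/

import Mathlib

open Finset

/-- Expectation of `f` under a (finitely supported) distribution `p` on a finite type. -/
noncomputable def expct {A : Type*} [Fintype A] (p : A → ℝ) (f : A → ℝ) : ℝ :=
  ∑ a, p a * f a

/-- Maximum of a real-valued function on a finite nonempty type. -/
noncomputable def amax {A : Type*} [Fintype A] [Nonempty A] (f : A → ℝ) : ℝ :=
  Finset.univ.sup' Finset.univ_nonempty f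

/-- The counterfactual-budgeting value `V_Q(s, b)`. -/
noncomputable def VQ {S A : Type*} [Fintype A] [Nonempty A] {B : ℕ}
    (μ : S → A → ℝ) (Q : S → Fin (B + 1) → A → ℝ) (s : S) (b : Fin (B + 1)) : ℝ :=
  if _ : (b : ℕ) = 0 then expct (μ s) (Q s b)
  else max (amax (Q s ⟨(b : ℕ) - 1, lt_of_le_of_lt (Nat.sub_le _ _) b.isLt⟩))
           (expct (μ s) (Q s b))

/-- The counterfactual-budgeting Bellman operator `T`. -/
noncomputable def TCB {S A : Type*} [Fintype S] [Fintype A] [Nonempty A] {B : ℕ}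
    (γ : ℝ) (r : S → A → ℝ) (P : S → A → S → ℝ) (μ : S → A → ℝ)
    (Q : S → Fin (B + 1) → A → ℝ) : S → Fin (B + 1) → A → ℝ :=
  fun s b a => r s a + γ * ∑ s', P s a s' * VQ μ Q s' b

/-- Sup norm over state-budget-action triples. -/
noncomputable def supNorm3 {S A : Type*} [Fintype S] [Nonempty S] [Fintype A] [Nonempty A]
    {B : ℕ} (Q : S → Fin (B + 1) → A → ℝ) : ℝ :=
  Finset.univ.sup' Finset.univ_nonempty
    (fun x : S × Fin (B + 1) × A => |Q x.1 x.2.1 x.2.2|)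

/-- Sup norm over state-budget pairs. -/
noncomputable def supNorm2 {S : Type*} [Fintype S] [Nonempty S]
    {B : ℕ} (V : S → Fin (B + 1) → ℝ) : ℝ :=
  Finset.univ.sup' Finset.univ_nonempty (fun x : S × Fin (B + 1) => |V x.1 x.2|)

/-- Sup norm over state-action pairs. -/
noncomputable def supNormSA {S A : Type*} [Fintype S] [Nonempty S] [Fintype A] [Nonempty A]
    (Q : S → A → ℝ) : ℝ :=
  Finset.univ.sup' Finset.univ_nonempty (fun x : S × A => |Q x.1 x.2|)

/-!
The gap `Qμ − Q*` satisfies a Bellman-type recursion: at every `(s, b, a)` it equals `γ` times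
a `P`-average of `E_μ Qμ − V_{Q*}`, and `V_{Q*} ≥ E_μ Q*` (the budget-`0` branch of `V` is
exactly `E_μ Q*`, the other branch is a `max` with it). Hence the gap is at most `γ` times its
own maximum `M`, so `M ≤ γ M`, and `γ < 1` forces `M ≤ 0`.
-/

theorem le_zero_of_le_mul_sup' {X : Type*} [Fintype X] [Nonempty X] {γ : ℝ} (hγ : γ < 1)
    (D : X → ℝ) (h : ∀ x, D x ≤ γ * univ.sup' univ_nonempty D) (x : X) : D x ≤ 0 := by
  obtain ⟨y, -, hy⟩ := exists_mem_eq_sup' univ_nonempty D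
  have hM : univ.sup' univ_nonempty D ≤ γ * univ.sup' univ_nonempty D := hy ▸ h y
  have hM0 : univ.sup' univ_nonempty D ≤ 0 := by nlinarith
  exact (le_sup' D (mem_univ x)).trans hM0

theorem expct_le_of_forall_le {A : Type*} [Fintype A] {p f : A → ℝ} {c : ℝ}
    (hp0 : ∀ a, 0 ≤ p a) (hp1 : ∑ a, p a = 1) (hf : ∀ a, f a ≤ c) : expct p f ≤ c :=
  calc expct p f ≤ ∑ a, p a * c :=
        sum_le_sum fun a _ => mul_le_mul_of_nonneg_left (hf a) (hp0 a)
    _ = c := by rw [← sum_mul, hp1, one_mul]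

theorem expct_sub {A : Type*} [Fintype A] (p f g : A → ℝ) :
    expct p f - expct p g = expct p (fun a => f a - g a) := by
  simp only [expct, mul_sub, sum_sub_distrib]

theorem expct_le_VQ {S A : Type*} [Fintype A] [Nonempty A] {B : ℕ}
    (μ : S → A → ℝ) (Q : S → Fin (B + 1) → A → ℝ) (s : S) (b : Fin (B + 1)) :
    expct (μ s) (Q s b) ≤ VQ μ Q s b := by
  unfold VQ
  split
  · exact le_rfl
  · exact le_max_right _ _

theorem fixedPoint_ge_Qmu {S A : Type*} [Fintype S] [Nonempty S] [Fintype A] [Nonempty A] {B : ℕ}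
    (γ : ℝ) (hγ0 : 0 ≤ γ) (hγ1 : γ < 1)
    (r : S → A → ℝ)
    (P : S → A → S → ℝ) (hP0 : ∀ s a s', 0 ≤ P s a s') (hP1 : ∀ s a, ∑ s', P s a s' = 1)
    (μ : S → A → ℝ) (hμ0 : ∀ s a, 0 ≤ μ s a) (hμ1 : ∀ s, ∑ a, μ s a = 1)
    (Qst : S → Fin (B + 1) → A → ℝ) (hQst : TCB γ r P μ Qst = Qst)
    (Qmu : S → A → ℝ)
    (hQmu : ∀ s a, Qmu s a = r s a + γ * ∑ s', P s a s' * expct (μ s') (Qmu s')) :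
    ∀ (s : S) (a : A) (b : Fin (B + 1)), Qmu s a ≤ Qst s b a := by
  intro s a b
  have hQst' : ∀ s b a, Qst s b a = r s a + γ * ∑ s', P s a s' * VQ μ Qst s' b :=
    fun s b a => (congrFun (congrFun (congrFun hQst s) b) a).symm
  let gap : S × Fin (B + 1) × A → ℝ := fun x => Qmu x.1 x.2.2 - Qst x.1 x.2.1 x.2.2
  set M := univ.sup' univ_nonempty gap
  have hgap : ∀ s b a, Qmu s a - Qst s b a ≤ M := fun s b a => le_sup' gap (mem_univ (s, b, a))
  have hstep : ∀ s b a, Qmu s a - Qst s b a ≤ γ * M := by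
    intro s b a
    have hnext : ∀ s', expct (μ s') (Qmu s') - VQ μ Qst s' b ≤ M := fun s' =>
      calc expct (μ s') (Qmu s') - VQ μ Qst s' b
          ≤ expct (μ s') (Qmu s') - expct (μ s') (Qst s' b) :=
            sub_le_sub_left (expct_le_VQ μ Qst s' b) _
        _ = expct (μ s') (fun a' => Qmu s' a' - Qst s' b a') := expct_sub _ _ _
        _ ≤ M := expct_le_of_forall_le (hμ0 s') (hμ1 s') fun a' => hgap s' b a'
    calc Qmu s a - Qst s b a
        = γ * expct (P s a) (fun s' => expct (μ s') (Qmu s') - VQ μ Qst s' b) := by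
          rw [hQmu s a, hQst' s b a, ← expct_sub]; unfold expct; ring
      _ ≤ γ * M :=
          mul_le_mul_of_nonneg_left (expct_le_of_forall_le (hP0 s a) (hP1 s a) hnext) hγ0
  exact sub_nonpos.mp (le_zero_of_le_mul_sup' hγ1 gap (fun x => hstep x.1 x.2.1 x.2.2) (s, b, a))
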